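/- arXiv:2405.20909 — 2 statements merged into one kernel-verified Lean document; each statement's English description precedes it below -/
import Mathlib

section
/- Let L be a nonnegative self-adjoint operator on a finite-dimensional normed space such that ‖e^{-sL}‖ ≤ 1 for all s ≥ 0. Then with f_t = Σ_{l=0}^k (tL)^l f/l!, the approximation error satisfies ‖f - e^{-tL} f_t‖ ≤ ‖(tL)^{k+1} f‖ / (k+1)!. -/
/-!
Put `A = tT` and `φ(s) = e^{-sA} Σ_{l ≤ k} (sA)^l f / l!`. Differentiating, the Taylor sum
telescopes and `φ'(s) = -(s^k / k!) e^{-sA} A^{k+1} f`, so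
`f - e^{-A} f_t = φ(0) - φ(1) = ∫₀¹ (s^k / k!) e^{-sA} A^{k+1} f ds`.
As `e^{-sA}` is a contraction, the norm of this integral is at most
`‖A^{k+1} f‖ ∫₀¹ s^k / k! ds = ‖A^{k+1} f‖ / (k+1)!`.
-/

open Finset NormedSpace intervalIntegral
open scoped Nat

theorem integral_pow_div_factorial (k : ℕ) :
    ∫ s in (0 : ℝ)..1, s ^ k / k ! = 1 / (k + 1)! := by
  rw [intervalIntegral.integral_div, integral_pow, Nat.factorial_succ]
  push_cast
  field_simp
  simp

section

variable {E : Type*} [NormedAddCommGroup E] [NormedSpace ℝ E]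

theorem hasDerivAt_sum_range_pow_div_factorial_smul (v : ℕ → E) (k : ℕ) (s : ℝ) :
    HasDerivAt (fun u : ℝ => ∑ l ∈ range (k + 1), (u ^ l / l !) • v l)
      (∑ l ∈ range k, (s ^ l / l !) • v (l + 1)) s := by
  have h := HasDerivAt.fun_sum (u := range (k + 1)) fun l _ =>
    ((hasDerivAt_pow l s).div_const (l ! : ℝ)).smul_const (v l)
  convert h using 1
  rw [sum_range_succ']
  simp only [CharP.cast_eq_zero, zero_mul, zero_div, zero_smul, add_zero]
  refine sum_congr rfl fun l _ => ?_
  rw [Nat.factorial_succ]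
  push_cast
  field_simp

variable [CompleteSpace E] (A : E →L[ℝ] E)

theorem hasDerivAt_exp_neg_smul (s : ℝ) :
    HasDerivAt (fun u : ℝ => exp (-(u • A))) (exp (-(s • A)) * -A) s := by
  simpa only [smul_neg] using hasDerivAt_exp_smul_const (𝕂 := ℝ) (-A) s

theorem hasDerivAt_exp_neg_smul_apply_sum (f : E) (k : ℕ) (s : ℝ) :
    HasDerivAt (fun u : ℝ => exp (-(u • A)) (∑ l ∈ range (k + 1), (u ^ l / l !) • (A ^ l) f))
      (-((s ^ k / k !) • exp (-(s • A)) ((A ^ (k + 1)) f))) s := by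
  have h := (hasDerivAt_exp_neg_smul A s).clm_apply
    (hasDerivAt_sum_range_pow_div_factorial_smul (fun l => (A ^ l) f) k s)
  -- applying `A` to the Taylor sum shifts it by one degree, so only the top term survives
  have telescope : (∑ l ∈ range k, (s ^ l / l !) • (A ^ (l + 1)) f)
      - A (∑ l ∈ range (k + 1), (s ^ l / l !) • (A ^ l) f)
      = -((s ^ k / k !) • (A ^ (k + 1)) f) := by
    have hshift (l : ℕ) : A ((A ^ l) f) = (A ^ (l + 1)) f := by rw [pow_succ']; rfl
    simp only [map_sum, map_smul, hshift]
    rw [sum_range_succ]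
    abel
  convert h using 1
  rw [mul_apply_eq_comp, neg_apply, ← map_add,
    neg_add_eq_sub, telescope, map_neg, map_smul]

theorem sub_exp_neg_apply_sum_eq_integral (f : E) (k : ℕ) :
    f - exp (-A) (∑ l ∈ range (k + 1), (l ! : ℝ)⁻¹ • (A ^ l) f)
      = ∫ s in (0 : ℝ)..1, (s ^ k / k !) • exp (-(s • A)) ((A ^ (k + 1)) f) := by
  have hcont : Continuous fun s : ℝ => (s ^ k / k !) • exp (-(s • A)) ((A ^ (k + 1)) f) :=
    ((continuous_pow k).div_const _).smul <|
      (continuous_iff_continuousAt.2 fun s => (hasDerivAt_exp_neg_smul A s).continuousAt).clm_apply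
        continuous_const
  have hFTC := integral_eq_sub_of_hasDerivAt (a := 0) (b := 1)
    (fun s _ => hasDerivAt_exp_neg_smul_apply_sum A f k s)
    (hcont.neg.intervalIntegrable _ _)
  have hφ0 : exp (-((0 : ℝ) • A)) (∑ l ∈ range (k + 1), ((0 : ℝ) ^ l / l !) • (A ^ l) f) = f := by
    rw [sum_range_succ']
    simp
  have hφ1 : exp (-((1 : ℝ) • A)) (∑ l ∈ range (k + 1), ((1 : ℝ) ^ l / l !) • (A ^ l) f)
      = exp (-A) (∑ l ∈ range (k + 1), (l ! : ℝ)⁻¹ • (A ^ l) f) := by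
    simp only [one_smul, one_pow, one_div]
  beta_reduce at hFTC
  rw [hφ0, hφ1, intervalIntegral.integral_neg] at hFTC
  rw [← neg_sub, ← hFTC, neg_neg]

theorem norm_sub_exp_neg_apply_sum_le (hA : ∀ s ∈ Set.Icc (0 : ℝ) 1, ‖exp (-(s • A))‖ ≤ 1)
    (f : E) (k : ℕ) :
    ‖f - exp (-A) (∑ l ∈ range (k + 1), (l ! : ℝ)⁻¹ • (A ^ l) f)‖
      ≤ ‖(A ^ (k + 1)) f‖ / (k + 1)! := by
  set w := (A ^ (k + 1)) f
  have hpointwise : ∀ s ∈ Set.Ioc (0 : ℝ) 1,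
      ‖(s ^ k / k !) • exp (-(s • A)) w‖ ≤ s ^ k / k ! * ‖w‖ := by
    intro s hs
    have hs0 : 0 ≤ s := hs.1.le
    rw [norm_smul, Real.norm_of_nonneg (by positivity)]
    refine mul_le_mul_of_nonneg_left ?_ (by positivity)
    simpa using (exp (-(s • A))).le_of_opNorm_le (hA s (Set.Ioc_subset_Icc_self hs)) w
  calc ‖f - exp (-A) (∑ l ∈ range (k + 1), (l ! : ℝ)⁻¹ • (A ^ l) f)‖
      = ‖∫ s in (0 : ℝ)..1, (s ^ k / k !) • exp (-(s • A)) w‖ := by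
        rw [sub_exp_neg_apply_sum_eq_integral]
    _ ≤ ∫ s in (0 : ℝ)..1, s ^ k / k ! * ‖w‖ :=
        norm_integral_le_of_norm_le zero_le_one (MeasureTheory.ae_of_all _ hpointwise)
          ((by fun_prop : Continuous fun s : ℝ => s ^ k / k ! * ‖w‖).intervalIntegrable _ _)
    _ = ‖w‖ / (k + 1)! := by
        rw [intervalIntegral.integral_mul_const, integral_pow_div_factorial]
        ring

end

theorem stmt_6_general {E : Type*} [NormedAddCommGroup E] [InnerProductSpace ℝ E]
    [FiniteDimensional ℝ E]
    (T : E →L[ℝ] E)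
    (hcontr : ∀ s : ℝ, 0 ≤ s → ‖NormedSpace.exp (-(s • T))‖ ≤ 1)
    (t : ℝ) (ht : 0 < t) (k : ℕ) (f : E)
    (ft : E) (hft : ft = ∑ l ∈ Finset.range (k+1), ((l.factorial : ℝ))⁻¹ • (((t • T)^l) f)) :
    ‖f - NormedSpace.exp (-(t • T)) ft‖ ≤ ‖((t • T)^(k+1)) f‖ / ((k+1).factorial : ℝ) := by
  subst hft
  refine norm_sub_exp_neg_apply_sum_le (t • T) (fun s hs => ?_) f k
  rw [smul_smul]
  exact hcontr _ (mul_nonneg hs.1 ht.le)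

/-- If the heat semigroup of a nonnegative self-adjoint operator `T` is a contraction,
then with `f_t = Σ_{l=0}^k (tT)^l f / l!` one has
`‖f - e^{-tT} f_t‖ ≤ ‖(tT)^{k+1} f‖ / (k+1)!`. -/
theorem stmt_6 {E : Type*} [NormedAddCommGroup E] [InnerProductSpace ℝ E]
    [FiniteDimensional ℝ E]
    (T : E →L[ℝ] E) (hsa : IsSelfAdjoint T)
    (hpos : ∀ v : E, 0 ≤ (inner ℝ (T v) v : ℝ))
    (hcontr : ∀ s : ℝ, 0 ≤ s → ‖NormedSpace.exp (-(s • T))‖ ≤ 1)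
    (t : ℝ) (ht : 0 < t) (k : ℕ) (f : E)
    (ft : E) (hft : ft = ∑ l ∈ Finset.range (k+1), ((l.factorial : ℝ))⁻¹ • (((t • T)^l) f)) :
    ‖f - NormedSpace.exp (-(t • T)) ft‖ ≤ ‖((t • T)^(k+1)) f‖ / ((k+1).factorial : ℝ) :=
  stmt_6_general T hcontr t ht k f ft hft
end

section
/- Let L be a nonnegative self-adjoint operator on L²(ν) over a finite set with eigenpairs (λ_j, u_j). For Λ > 0 let Σ_Λ = span{u_j : λ_j ≤ Λ}. Then every f ∈ Σ_Λ satisfies ‖f‖_∞² ≤ e · (max_{x∈V} p_{1/Λ}(x,x)) · ‖f‖_{L²(ν)}². -/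
/-!
Write `f = ∑_{λ_j ≤ Λ} c_j u_j`. Orthonormality gives `‖f‖²_{L²(ν)} = ∑ c_j²`, and Cauchy–Schwarz
gives `f(x)² ≤ (∑ c_j²) · ∑_{λ_j ≤ Λ} u_j(x)²`. Since `1_{[0,Λ]}(λ) ≤ e^{1 - λ/Λ}`, the last sum is
at most `e · p_{1/Λ}(x,x)`.
-/

theorem sum_sq_mul_weight_eq_sum_sq_of_orthonormal {V ι : Type*} [Fintype V] [DecidableEq ι]
    (ν : V → ℝ) (u : ι → V → ℝ)
    (horth : ∀ i j, ∑ x, u i x * u j x * ν x = if i = j then 1 else 0)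
    (S : Finset ι) (c : ι → ℝ) :
    ∑ y, (∑ j ∈ S, c j * u j y) ^ 2 * ν y = ∑ j ∈ S, c j ^ 2 := by
  calc ∑ y, (∑ j ∈ S, c j * u j y) ^ 2 * ν y
      = ∑ i ∈ S, ∑ j ∈ S, c i * c j * ∑ y, u i y * u j y * ν y := by
        simp_rw [sq, Finset.sum_mul_sum, Finset.sum_mul, Finset.mul_sum]
        rw [Finset.sum_comm]
        refine Finset.sum_congr rfl fun i _ => ?_
        rw [Finset.sum_comm]
        refine Finset.sum_congr rfl fun j _ => Finset.sum_congr rfl fun y _ => ?_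
        ring
    _ = ∑ j ∈ S, c j ^ 2 := by
        simp_rw [horth, mul_ite, mul_one, mul_zero, Finset.sum_ite_eq, sq]
        exact Finset.sum_congr rfl fun j hj => if_pos hj

theorem one_le_exp_one_mul_exp_neg_inv_mul {lam Λ : ℝ} (hΛ : 0 < Λ) (hlam : lam ≤ Λ) :
    1 ≤ Real.exp 1 * Real.exp (-(Λ⁻¹ * lam)) := by
  rw [← Real.exp_add, Real.one_le_exp_iff]
  have : Λ⁻¹ * lam ≤ 1 := by
    rw [inv_mul_le_iff₀ hΛ, mul_one]; exact hlam
  linarith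

theorem sum_filter_sq_le_exp_one_mul_heat_diag {ι : Type*} [Fintype ι]
    (lam : ι → ℝ) {Λ : ℝ} (hΛ : 0 < Λ) (a : ι → ℝ) :
    ∑ j ∈ Finset.univ.filter (fun j => lam j ≤ Λ), a j ^ 2
      ≤ Real.exp 1 * ∑ j, Real.exp (-(Λ⁻¹ * lam j)) * a j * a j := by
  rw [Finset.mul_sum]
  have hterm : ∀ j, 0 ≤ Real.exp 1 * (Real.exp (-(Λ⁻¹ * lam j)) * a j * a j) := fun j =>
    mul_nonneg (Real.exp_pos _).le
      (by rw [mul_assoc]; exact mul_nonneg (Real.exp_pos _).le (mul_self_nonneg _))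
  calc ∑ j ∈ Finset.univ.filter (fun j => lam j ≤ Λ), a j ^ 2
      ≤ ∑ j ∈ Finset.univ.filter (fun j => lam j ≤ Λ),
          Real.exp 1 * (Real.exp (-(Λ⁻¹ * lam j)) * a j * a j) := by
        refine Finset.sum_le_sum fun j hj => ?_
        have h1 := one_le_exp_one_mul_exp_neg_inv_mul hΛ (Finset.mem_filter.1 hj).2
        nlinarith [sq_nonneg (a j)]
    _ ≤ ∑ j, Real.exp 1 * (Real.exp (-(Λ⁻¹ * lam j)) * a j * a j) :=
        Finset.sum_le_sum_of_subset_of_nonneg (Finset.subset_univ _) fun j _ _ => hterm j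

theorem stmt_10_general {V : Type*} [Fintype V]
    (ν : V → ℝ)
    (N : ℕ) (lam : Fin N → ℝ)
    (u : Fin N → V → ℝ)
    (horth : ∀ i j, ∑ x, u i x * u j x * ν x = if i = j then (1:ℝ) else 0)
    (Λ : ℝ) (hΛ : 0 < Λ)
    (p : V → V → ℝ)
    (hp : ∀ x y, p x y = ∑ j, Real.exp (-(Λ⁻¹ * lam j)) * u j x * u j y)
    (c : Fin N → ℝ) (f : V → ℝ)
    (hf : f = fun x => ∑ j ∈ Finset.univ.filter (fun j : Fin N => lam j ≤ Λ), c j * u j x) :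
    ∀ x, (f x)^2 ≤ Real.exp 1 * (⨆ z, p z z) * ∑ y, (f y)^2 * ν y := by
  intro x
  set S := Finset.univ.filter (fun j : Fin N => lam j ≤ Λ)
  have hdiag : ∑ j ∈ S, u j x ^ 2 ≤ Real.exp 1 * ⨆ z, p z z := by
    have hsup : p x x ≤ ⨆ z, p z z := le_ciSup (Set.finite_range fun z => p z z).bddAbove x
    calc ∑ j ∈ S, u j x ^ 2 ≤ Real.exp 1 * p x x := by
          rw [hp]; exact sum_filter_sq_le_exp_one_mul_heat_diag lam hΛ (fun j => u j x)
      _ ≤ Real.exp 1 * ⨆ z, p z z := by gcongr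
  subst hf
  calc (∑ j ∈ S, c j * u j x) ^ 2 ≤ (∑ j ∈ S, c j ^ 2) * ∑ j ∈ S, u j x ^ 2 :=
        Finset.sum_mul_sq_le_sq_mul_sq S c fun j => u j x
    _ ≤ (∑ j ∈ S, c j ^ 2) * (Real.exp 1 * ⨆ z, p z z) := by
        gcongr
    _ = Real.exp 1 * (⨆ z, p z z) * ∑ y, (∑ j ∈ S, c j * u j y) ^ 2 * ν y := by
        rw [sum_sq_mul_weight_eq_sum_sq_of_orthonormal ν u horth]; ring

/-- `L^∞–L²` comparison on low-frequency spectral subspaces: if `f ∈ span{u_j : λ_j ≤ Λ}`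
then `‖f‖_∞² ≤ e · (max_x p_{1/Λ}(x,x)) · ‖f‖_{L²(ν)}²`. -/
theorem stmt_10 {V : Type*} [Fintype V] [Nonempty V]
    (ν : V → ℝ) (hν : ∀ x, 0 < ν x) (hν1 : ∑ x, ν x = 1)
    (N : ℕ) (lam : Fin N → ℝ) (hlam : ∀ j, 0 ≤ lam j)
    (u : Fin N → V → ℝ)
    (horth : ∀ i j, ∑ x, u i x * u j x * ν x = if i = j then (1:ℝ) else 0)
    (Λ : ℝ) (hΛ : 0 < Λ)
    (p : V → V → ℝ)
    (hp : ∀ x y, p x y = ∑ j, Real.exp (-(Λ⁻¹ * lam j)) * u j x * u j y)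
    (c : Fin N → ℝ) (f : V → ℝ)
    (hf : f = fun x => ∑ j ∈ Finset.univ.filter (fun j : Fin N => lam j ≤ Λ), c j * u j x) :
    ∀ x, (f x)^2 ≤ Real.exp 1 * (⨆ z, p z z) * ∑ y, (f y)^2 * ν y :=
  stmt_10_general ν N lam u horth Λ hΛ p hp c f hf
end
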